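/- Let r†, x†, b† be nonzero real numbers and δ_r, δ_x, δ_b real numbers, and define f_W : ℝ → ℂ by f_W(m) = (1 − x†(1+δ_x m)·b†(1+δ_b m)) + i·r†(1+δ_r m)·b†(1+δ_b m). Let m1, m2 be real numbers such that it is NOT the case that both δ_x + δ_b + δ_x δ_b (m1+m2) = 0 and δ_r + δ_b + δ_r δ_b (m1+m2) = 0. Then f_W(m1) = f_W(m2) if and only if m1 = m2. (Theorem 1 of the paper, with the paper's probability-zero exceptional scenario excluded by an explicit hypothesis.) -/

import Mathlib

/-!
The real and imaginary parts of `f_W` are both of the form `c (1 + p m) (1 + q m)`, and such a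
quadratic satisfies `g m₁ - g m₂ = c (m₁ - m₂) (p + q + p q (m₁ + m₂))`. The hypothesis says that
for the real or for the imaginary part the last factor is nonzero, so equal values force `m₁ = m₂`.
-/

/-- The function `f_W(m) = (1 − x†(1+δ_x m)·b†(1+δ_b m)) + i·r†(1+δ_r m)·b†(1+δ_b m)`
modeling `W_pq = 1 + z_pq·b_pq` for line parameters in bin `m`. -/
noncomputable def fW (rd xd bd δr δx δb : ℝ) (m : ℝ) : ℂ :=
  ((1 - xd * (1 + δx * m) * (bd * (1 + δb * m)) : ℝ) : ℂ) +
    Complex.I * ((rd * (1 + δr * m) * (bd * (1 + δb * m)) : ℝ) : ℂ)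

section ProductOfAffine

variable {R : Type*} [CommRing R]

theorem mul_one_add_mul_sub_mul_one_add_mul (c p q m₁ m₂ : R) :
    c * (1 + p * m₁) * (1 + q * m₁) - c * (1 + p * m₂) * (1 + q * m₂) =
      c * (m₁ - m₂) * (p + q + p * q * (m₁ + m₂)) := by
  ring

theorem eq_of_mul_one_add_mul_eq [IsDomain R] {c p q m₁ m₂ : R} (hc : c ≠ 0)
    (hpq : p + q + p * q * (m₁ + m₂) ≠ 0)
    (h : c * (1 + p * m₁) * (1 + q * m₁) = c * (1 + p * m₂) * (1 + q * m₂)) : m₁ = m₂ := by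
  have hzero := mul_one_add_mul_sub_mul_one_add_mul c p q m₁ m₂
  rw [h, sub_self, eq_comm] at hzero
  simpa [hc, hpq, sub_eq_zero] using hzero

end ProductOfAffine

theorem fW_re (rd xd bd δr δx δb m : ℝ) :
    (fW rd xd bd δr δx δb m).re = 1 - xd * bd * (1 + δx * m) * (1 + δb * m) := by
  rw [fW, Complex.add_re, Complex.ofReal_re, Complex.I_mul_re, Complex.ofReal_im, neg_zero, add_zero]
  ring

theorem fW_im (rd xd bd δr δx δb m : ℝ) :
    (fW rd xd bd δr δx δb m).im = rd * bd * (1 + δr * m) * (1 + δb * m) := by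
  rw [fW, Complex.add_im, Complex.ofReal_im, Complex.I_mul_im, Complex.ofReal_re, zero_add]
  ring

/-- Theorem 1 of the paper: with the probability-zero exceptional scenario excluded,
`f_W(m1) = f_W(m2)` iff `m1 = m2`. -/
theorem fW_eq_iff (rd xd bd δr δx δb : ℝ)
    (hrd : rd ≠ 0) (hxd : xd ≠ 0) (hbd : bd ≠ 0) (m1 m2 : ℝ)
    (hexc : ¬ (δx + δb + δx * δb * (m1 + m2) = 0 ∧
               δr + δb + δr * δb * (m1 + m2) = 0)) :
    fW rd xd bd δr δx δb m1 = fW rd xd bd δr δx δb m2 ↔ m1 = m2 := by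
  refine ⟨fun h => ?_, congrArg _⟩
  rcases not_and_or.mp hexc with hx | hr
  · have hre := congrArg Complex.re h
    rw [fW_re, fW_re, sub_right_inj] at hre
    exact eq_of_mul_one_add_mul_eq (mul_ne_zero hxd hbd) hx hre
  · have him := congrArg Complex.im h
    rw [fW_im, fW_im] at him
    exact eq_of_mul_one_add_mul_eq (mul_ne_zero hrd hbd) hr him
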